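/- arXiv:1707.03926 — 2 statements merged into one kernel-verified Lean document; each statement's English description precedes it below -/
import Mathlib

section
/- Let μ be a finite Borel measure supported on a compact set A ⊂ ℝ^p, let x ∈ A satisfy μ(B(x,r)) ≤ c(x)·r^d for all r > 0, and let d − 2 < s < d. Embed ℝ^p in ℝ^{p+1} and for r > 0 let x_r = (x, r) ∈ ℝ^{p+1}. Then there exists a constant c₁ depending only on s and d such that for all r > 0, U_s^μ(x_r) ≥ U_s^μ(x) − c₁ · c(x) · r^{d−s}, where U_s^μ(z) = ∫_A |z − y|^{−s} dμ(y). -/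
open MeasureTheory Metric ENNReal


lemma sq_rpow' (t : ℝ) (ht : 0 ≤ t) (c : ℝ) : (t ^ 2) ^ c = t ^ (2 * c) := by
  rw [← Real.rpow_natCast t 2, ← Real.rpow_mul ht]
  norm_num

lemma rpow_div_pow (r : ℝ) (hr : 0 < r) (c : ℝ) (k : ℕ) :
    (r / 2 ^ k) ^ c = r ^ c * ((2:ℝ) ^ (-c)) ^ k := by
  rw [Real.div_rpow hr.le (by positivity), ← Real.rpow_natCast (2:ℝ) k,
    ← Real.rpow_natCast ((2:ℝ) ^ (-c)) k, ← Real.rpow_mul (by norm_num : (0:ℝ) ≤ 2),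
    ← Real.rpow_mul (by norm_num : (0:ℝ) ≤ 2), div_eq_mul_inv, ← Real.rpow_neg (by norm_num)]
  ring_nf

lemma rpow_mul_pow (r : ℝ) (hr : 0 < r) (c : ℝ) (k : ℕ) :
    (r * 2 ^ k) ^ c = r ^ c * ((2:ℝ) ^ c) ^ k := by
  rw [Real.mul_rpow hr.le (by positivity), ← Real.rpow_natCast (2:ℝ) k,
    ← Real.rpow_natCast ((2:ℝ) ^ c) k, ← Real.rpow_mul (by norm_num : (0:ℝ) ≤ 2),
    ← Real.rpow_mul (by norm_num : (0:ℝ) ≤ 2)]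
  ring_nf

lemma key_pt {q a b : ℝ} (hq : 0 < q) (ha : 0 < a) (hab : a ≤ b) :
    a ^ (-q) - b ^ (-q) ≤ q * a ^ (-q - 1) * (b - a) := by
  have hd : ∀ u ∈ Set.Ici a, HasDerivWithinAt (fun v : ℝ => v ^ (-q))
      ((fun v : ℝ => -q * v ^ (-q - 1)) u) (Set.Ici a) u := fun u hu =>
    (Real.hasDerivAt_rpow_const (Or.inl (ha.trans_le hu).ne')).hasDerivWithinAt
  have hbd : ∀ u ∈ Set.Ici a, ‖(fun v : ℝ => -q * v ^ (-q - 1)) u‖ ≤ q * a ^ (-q - 1) := by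
    intro u hu
    have hu0 : (0:ℝ) < u := ha.trans_le hu
    rw [norm_mul, norm_neg, Real.norm_eq_abs, Real.norm_eq_abs, abs_of_pos hq,
      abs_of_nonneg (Real.rpow_nonneg hu0.le _)]
    exact mul_le_mul_of_nonneg_left
      (Real.rpow_le_rpow_of_nonpos ha hu (by linarith)) hq.le
  have h := (convex_Ici a).norm_image_sub_le_of_norm_hasDerivWithin_le hd hbd
    Set.self_mem_Ici (Set.mem_Ici.mpr hab)
  rw [Real.norm_eq_abs, Real.norm_eq_abs] at h
  have h1 : a ^ (-q) - b ^ (-q) ≤ |b ^ (-q) - a ^ (-q)| := by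
    rw [abs_sub_comm]; exact le_abs_self _
  have h2 : |b - a| = b - a := abs_of_nonneg (by linarith)
  calc a ^ (-q) - b ^ (-q) ≤ |b ^ (-q) - a ^ (-q)| := h1
    _ ≤ q * a ^ (-q - 1) * |b - a| := h
    _ = q * a ^ (-q - 1) * (b - a) := by rw [h2]

variable {E : Type*} [NormedAddCommGroup E] [MeasurableSpace E] [OpensMeasurableSpace E]

lemma dyadic_near (ν : Measure E) (x : E) {cx r s d : ℝ} (hcx : 0 ≤ cx)
    (hs : 0 < s) (hsd : s < d) (hr : 0 < r)
    (hc : ∀ ρ : ℝ, 0 < ρ → ν (Metric.ball x ρ) ≤ ENNReal.ofReal (cx * ρ ^ d)) :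
    ∫⁻ y in Metric.ball x r, ENNReal.ofReal (‖y - x‖ ^ (-s)) ∂ν ≤
      ENNReal.ofReal (2 ^ s / (1 - 2 ^ (s - d)) * cx * r ^ (d - s)) := by
  set Ak : ℕ → Set E := fun k => Metric.ball x (r / 2 ^ k) \ Metric.ball x (r / 2 ^ (k + 1))
    with hAk
  set B : ℕ → ℝ≥0∞ := fun k => ENNReal.ofReal ((r / 2 ^ (k + 1)) ^ (-s)) with hB
  have hAkm : ∀ k, MeasurableSet (Ak k) := fun k =>
    measurableSet_ball.diff measurableSet_ball
  set g : E → ℝ≥0∞ := fun y => ∑' k, (Ak k).indicator (fun _ => B k) y with hg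
  have hgm : Measurable g :=
    Measurable.ennreal_tsum fun k => measurable_const.indicator (hAkm k)
  have hcover : ∀ y ∈ Metric.ball x r, ENNReal.ofReal (‖y - x‖ ^ (-s)) ≤ g y := by
    intro y hy
    rcases eq_or_lt_of_le (norm_nonneg (y - x)) with h0 | ht
    · rw [← h0, Real.zero_rpow (by linarith)]
      simp
    · set t := ‖y - x‖ with htdef
      have htr : t < r := by
        have := mem_ball_iff_norm.mp hy
        simpa [← htdef] using this
      have hex : ∃ n : ℕ, r / 2 ^ (n + 1) ≤ t := by
        obtain ⟨n, hn⟩ := pow_unbounded_of_one_lt (r / t) (one_lt_two (α := ℝ))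
        refine ⟨n, ?_⟩
        have h1 : r / 2 ^ n < t := by
          rw [div_lt_iff₀ (by positivity)]
          rw [div_lt_iff₀ ht] at hn
          linarith [hn]
        have h2 : r / 2 ^ (n + 1) ≤ r / 2 ^ n :=
          div_le_div_of_nonneg_left hr.le (by positivity) (by
            exact pow_le_pow_right₀ (by norm_num) (Nat.le_succ n))
        linarith
      obtain ⟨k, hk1, hk2⟩ : ∃ k : ℕ, r / 2 ^ (k + 1) ≤ t ∧ t < r / 2 ^ k := by
        refine ⟨Nat.find hex, Nat.find_spec hex, ?_⟩
        rcases Nat.eq_zero_or_pos (Nat.find hex) with h0 | hpos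
        · rw [h0]; simpa using htr
        · have hlt := Nat.find_min hex (Nat.sub_lt hpos one_pos)
          push_neg at hlt
          have heq : Nat.find hex - 1 + 1 = Nat.find hex := by omega
          rwa [heq] at hlt
      have hyA : y ∈ Ak k := by
        constructor
        · rw [mem_ball_iff_norm]; exact hk2
        · rw [mem_ball_iff_norm]; push_neg; exact hk1
      have hle : ENNReal.ofReal (t ^ (-s)) ≤ B k := by
        apply ENNReal.ofReal_le_ofReal
        exact Real.rpow_le_rpow_of_nonpos (by positivity) hk1 (by linarith)
      calc ENNReal.ofReal (t ^ (-s)) ≤ B k := hle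
        _ = (Ak k).indicator (fun _ => B k) y := (Set.indicator_of_mem hyA fun _ => B k).symm
        _ ≤ g y := ENNReal.le_tsum k
  have step1 : ∫⁻ y in Metric.ball x r, ENNReal.ofReal (‖y - x‖ ^ (-s)) ∂ν ≤
      ∫⁻ y, g y ∂ν := by
    refine le_trans (setLIntegral_mono hgm hcover) (setLIntegral_le_lintegral _ _)
  have step2 : ∫⁻ y, g y ∂ν = ∑' k, B k * ν (Ak k) := by
    rw [hg, lintegral_tsum fun k => (measurable_const.indicator (hAkm k)).aemeasurable]
    congr 1
    ext k
    rw [lintegral_indicator_const (hAkm k)]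
  set u : ℕ → ℝ := fun k => (r / 2 ^ (k + 1)) ^ (-s) * (cx * (r / 2 ^ k) ^ d) with hu
  have step3 : ∑' k, B k * ν (Ak k) ≤ ∑' k, ENNReal.ofReal (u k) := by
    apply ENNReal.tsum_le_tsum
    intro k
    have h1 : ν (Ak k) ≤ ENNReal.ofReal (cx * (r / 2 ^ k) ^ d) := by
      refine le_trans (measure_mono (Set.diff_subset)) (hc _ (by positivity))
    calc B k * ν (Ak k) ≤ B k * ENNReal.ofReal (cx * (r / 2 ^ k) ^ d) :=
          mul_le_mul_right h1 _
      _ = ENNReal.ofReal (u k) := by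
          rw [hB, ← ENNReal.ofReal_mul (by positivity)]
  have huk : ∀ k, u k = (2 ^ s * cx * r ^ (d - s)) * ((2:ℝ) ^ (s - d)) ^ k := by
    intro k
    have hrds : r ^ (d - s) = r ^ (-s) * r ^ d := by
      rw [← Real.rpow_add hr]; congr 1; ring
    have hpow : ((2:ℝ) ^ (s - d)) ^ k = ((2:ℝ) ^ s) ^ k * ((2:ℝ) ^ (-d)) ^ k := by
      rw [← mul_pow]
      congr 1
      rw [← Real.rpow_add (by norm_num : (0:ℝ) < 2), sub_eq_add_neg]
    rw [hu]
    simp only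
    rw [rpow_div_pow r hr (-s) (k + 1), rpow_div_pow r hr d k, neg_neg, hrds, hpow, pow_succ]
    ring
  have hρ0 : (0:ℝ) ≤ (2:ℝ) ^ (s - d) := Real.rpow_nonneg (by norm_num) _
  have hρ1 : (2:ℝ) ^ (s - d) < 1 :=
    Real.rpow_lt_one_of_one_lt_of_neg (by norm_num) (by linarith)
  have hsumm : Summable u := by
    have : Summable (fun k : ℕ => (2 ^ s * cx * r ^ (d - s)) * ((2:ℝ) ^ (s - d)) ^ k) :=
      (summable_geometric_of_lt_one hρ0 hρ1).mul_left _
    exact this.congr fun k => (huk k).symm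
  have hunn : ∀ k, 0 ≤ u k := fun k => by rw [hu]; positivity
  have step4 : ∑' k, ENNReal.ofReal (u k) = ENNReal.ofReal (∑' k, u k) :=
    (ENNReal.ofReal_tsum_of_nonneg hunn hsumm).symm
  have step5 : ∑' k, u k = 2 ^ s / (1 - 2 ^ (s - d)) * cx * r ^ (d - s) := by
    have : ∑' k, u k = (2 ^ s * cx * r ^ (d - s)) * (1 - (2:ℝ) ^ (s - d))⁻¹ := by
      simp_rw [huk]
      rw [tsum_mul_left, tsum_geometric_of_lt_one hρ0 hρ1]
    rw [this]
    field_simp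
  calc ∫⁻ y in Metric.ball x r, ENNReal.ofReal (‖y - x‖ ^ (-s)) ∂ν
      ≤ ∫⁻ y, g y ∂ν := step1
    _ = ∑' k, B k * ν (Ak k) := step2
    _ ≤ ∑' k, ENNReal.ofReal (u k) := step3
    _ = ENNReal.ofReal (∑' k, u k) := step4
    _ = _ := by rw [step5]

lemma dyadic_far (ν : Measure E) (x : E) {cx r s d : ℝ} (hcx : 0 ≤ cx)
    (hs : 0 < s) (hds : d < s + 2) (hr : 0 < r)
    (hc : ∀ ρ : ℝ, 0 < ρ → ν (Metric.ball x ρ) ≤ ENNReal.ofReal (cx * ρ ^ d)) :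
    ∫⁻ y in (Metric.ball x r)ᶜ, ENNReal.ofReal (‖y - x‖ ^ (-(s + 2))) ∂ν ≤
      ENNReal.ofReal (2 ^ d / (1 - 2 ^ (d - s - 2)) * cx * r ^ (d - s - 2)) := by
  set Ak : ℕ → Set E := fun k => Metric.ball x (r * 2 ^ (k + 1)) \ Metric.ball x (r * 2 ^ k)
    with hAk
  set B : ℕ → ℝ≥0∞ := fun k => ENNReal.ofReal ((r * 2 ^ k) ^ (-(s + 2))) with hB
  have hAkm : ∀ k, MeasurableSet (Ak k) := fun k =>
    measurableSet_ball.diff measurableSet_ball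
  set g : E → ℝ≥0∞ := fun y => ∑' k, (Ak k).indicator (fun _ => B k) y with hg
  have hgm : Measurable g :=
    Measurable.ennreal_tsum fun k => measurable_const.indicator (hAkm k)
  have hcover : ∀ y ∈ (Metric.ball x r)ᶜ, ENNReal.ofReal (‖y - x‖ ^ (-(s + 2))) ≤ g y := by
    intro y hy
    set t := ‖y - x‖ with htdef
    have htr : r ≤ t := by
      have := hy
      rw [Set.mem_compl_iff, mem_ball_iff_norm] at this
      push_neg at this
      exact this
    have ht : 0 < t := lt_of_lt_of_le hr htr
    have hex : ∃ n : ℕ, t < r * 2 ^ (n + 1) := by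
      obtain ⟨n, hn⟩ := pow_unbounded_of_one_lt (t / r) (one_lt_two (α := ℝ))
      refine ⟨n, ?_⟩
      rw [div_lt_iff₀ hr] at hn
      have : (2:ℝ) ^ n ≤ 2 ^ (n + 1) := pow_le_pow_right₀ (by norm_num) (Nat.le_succ n)
      nlinarith
    obtain ⟨k, hk1, hk2⟩ : ∃ k : ℕ, t < r * 2 ^ (k + 1) ∧ r * 2 ^ k ≤ t := by
      refine ⟨Nat.find hex, Nat.find_spec hex, ?_⟩
      rcases Nat.eq_zero_or_pos (Nat.find hex) with h0 | hpos
      · rw [h0]; simpa using htr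
      · have hlt := Nat.find_min hex (Nat.sub_lt hpos one_pos)
        push_neg at hlt
        have heq : Nat.find hex - 1 + 1 = Nat.find hex := by omega
        rwa [heq] at hlt
    have hyA : y ∈ Ak k := by
      constructor
      · rw [mem_ball_iff_norm]; exact hk1
      · rw [mem_ball_iff_norm]; push_neg; exact hk2
    have hle : ENNReal.ofReal (t ^ (-(s + 2))) ≤ B k := by
      apply ENNReal.ofReal_le_ofReal
      exact Real.rpow_le_rpow_of_nonpos (by positivity) hk2 (by linarith)
    calc ENNReal.ofReal (t ^ (-(s + 2))) ≤ B k := hle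
      _ = (Ak k).indicator (fun _ => B k) y := (Set.indicator_of_mem hyA fun _ => B k).symm
      _ ≤ g y := ENNReal.le_tsum k
  have step1 : ∫⁻ y in (Metric.ball x r)ᶜ, ENNReal.ofReal (‖y - x‖ ^ (-(s + 2))) ∂ν ≤
      ∫⁻ y, g y ∂ν :=
    le_trans (setLIntegral_mono hgm hcover) (setLIntegral_le_lintegral _ _)
  have step2 : ∫⁻ y, g y ∂ν = ∑' k, B k * ν (Ak k) := by
    rw [hg, lintegral_tsum fun k => (measurable_const.indicator (hAkm k)).aemeasurable]
    congr 1
    ext k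
    rw [lintegral_indicator_const (hAkm k)]
  set u : ℕ → ℝ := fun k => (r * 2 ^ k) ^ (-(s + 2)) * (cx * (r * 2 ^ (k + 1)) ^ d) with hu
  have step3 : ∑' k, B k * ν (Ak k) ≤ ∑' k, ENNReal.ofReal (u k) := by
    apply ENNReal.tsum_le_tsum
    intro k
    have h1 : ν (Ak k) ≤ ENNReal.ofReal (cx * (r * 2 ^ (k + 1)) ^ d) :=
      le_trans (measure_mono (Set.diff_subset)) (hc _ (by positivity))
    calc B k * ν (Ak k) ≤ B k * ENNReal.ofReal (cx * (r * 2 ^ (k + 1)) ^ d) :=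
          mul_le_mul_right h1 _
      _ = ENNReal.ofReal (u k) := by
          rw [hB, ← ENNReal.ofReal_mul (by positivity)]
  have huk : ∀ k, u k = (2 ^ d * cx * r ^ (d - s - 2)) * ((2:ℝ) ^ (d - s - 2)) ^ k := by
    intro k
    have hrds : r ^ (d - s - 2) = r ^ (-(s + 2)) * r ^ d := by
      rw [← Real.rpow_add hr]; congr 1; ring
    have hpow : ((2:ℝ) ^ (d - s - 2)) ^ k = ((2:ℝ) ^ (-(s + 2))) ^ k * ((2:ℝ) ^ d) ^ k := by
      rw [← mul_pow]
      congr 1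
      rw [← Real.rpow_add (by norm_num : (0:ℝ) < 2)]
      congr 1
      ring
    rw [hu]
    simp only
    rw [rpow_mul_pow r hr (-(s + 2)) k, rpow_mul_pow r hr d (k + 1), hrds, hpow, pow_succ]
    ring
  have hρ0 : (0:ℝ) ≤ (2:ℝ) ^ (d - s - 2) := Real.rpow_nonneg (by norm_num) _
  have hρ1 : (2:ℝ) ^ (d - s - 2) < 1 :=
    Real.rpow_lt_one_of_one_lt_of_neg (by norm_num) (by linarith)
  have hsumm : Summable u := by
    have : Summable (fun k : ℕ => (2 ^ d * cx * r ^ (d - s - 2)) * ((2:ℝ) ^ (d - s - 2)) ^ k) :=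
      (summable_geometric_of_lt_one hρ0 hρ1).mul_left _
    exact this.congr fun k => (huk k).symm
  have hunn : ∀ k, 0 ≤ u k := fun k => by rw [hu]; positivity
  have step4 : ∑' k, ENNReal.ofReal (u k) = ENNReal.ofReal (∑' k, u k) :=
    (ENNReal.ofReal_tsum_of_nonneg hunn hsumm).symm
  have step5 : ∑' k, u k = 2 ^ d / (1 - 2 ^ (d - s - 2)) * cx * r ^ (d - s - 2) := by
    have h : ∑' k, u k = (2 ^ d * cx * r ^ (d - s - 2)) * (1 - (2:ℝ) ^ (d - s - 2))⁻¹ := by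
      simp_rw [huk]
      rw [tsum_mul_left, tsum_geometric_of_lt_one hρ0 hρ1]
    rw [h]
    field_simp
  calc ∫⁻ y in (Metric.ball x r)ᶜ, ENNReal.ofReal (‖y - x‖ ^ (-(s + 2))) ∂ν
      ≤ ∫⁻ y, g y ∂ν := step1
    _ = ∑' k, B k * ν (Ak k) := step2
    _ ≤ ∑' k, ENNReal.ofReal (u k) := step3
    _ = ENNReal.ofReal (∑' k, u k) := step4
    _ = _ := by rw [step5]


/-- Identifying `ℝ^p` with `ℝ^p × {0} ⊂ ℝ^{p+1}` and writing `x_r = (x, r)`, one has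
`|x_r - y|² = |x - y|² + r²` for `y ∈ ℝ^p`, so the Riesz `s`-potential of `μ` at `x_r`
is `∫ (‖y - x‖² + r²)^{-s/2} dμ(y)`. -/
theorem stmt3 (s d : ℝ) (hs : 0 < s) (hds : d - 2 < s) (hsd : s < d) :
    ∃ c₁ > (0 : ℝ), ∀ (p : ℕ) (A : Set (EuclideanSpace ℝ (Fin p))), IsCompact A →
      ∀ (μ : Measure (EuclideanSpace ℝ (Fin p))), IsFiniteMeasure μ →
        μ Aᶜ = 0 →
        ∀ (x : EuclideanSpace ℝ (Fin p)), x ∈ A →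
          ∀ cx : ℝ, 0 ≤ cx →
            (∀ r : ℝ, 0 < r → μ (Metric.ball x r) ≤ ENNReal.ofReal (cx * r ^ d)) →
            ∀ r : ℝ, 0 < r →
              (∫ y in A, (‖y - x‖ ^ 2 + r ^ 2) ^ (-s / 2) ∂μ) ≥
                (∫ y in A, ‖y - x‖ ^ (-s) ∂μ) - c₁ * cx * r ^ (d - s) := by
  have h2pos : (0:ℝ) < 2 := by norm_num
  have hden1 : (0:ℝ) < 1 - 2 ^ (s - d) := by
    have := Real.rpow_lt_one_of_one_lt_of_neg (x := (2:ℝ)) (by norm_num) (by linarith : s - d < 0)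
    linarith
  have hden2 : (0:ℝ) < 1 - 2 ^ (d - s - 2) := by
    have := Real.rpow_lt_one_of_one_lt_of_neg (x := (2:ℝ)) (by norm_num) (by linarith : d - s - 2 < 0)
    linarith
  set C1 : ℝ := 2 ^ s / (1 - 2 ^ (s - d)) with hC1
  set C2 : ℝ := 2 ^ d / (1 - 2 ^ (d - s - 2)) with hC2
  have hC1pos : 0 < C1 := div_pos (Real.rpow_pos_of_pos h2pos s) hden1
  have hC2pos : 0 < C2 := div_pos (Real.rpow_pos_of_pos h2pos d) hden2
  refine ⟨C1 + s / 2 * C2, by positivity, ?_⟩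
  intro p A _hA μ hμfin _hμA x _hx cx hcx hc r hr
  haveI := hμfin
  set ν := μ.restrict A with hν
  have hc' : ∀ ρ : ℝ, 0 < ρ → ν (Metric.ball x ρ) ≤ ENNReal.ofReal (cx * ρ ^ d) :=
    fun ρ hρ => le_trans (Measure.restrict_apply_le _ _) (hc ρ hρ)
  set f : EuclideanSpace ℝ (Fin p) → ℝ := fun y => ‖y - x‖ ^ (-s) with hf
  set g : EuclideanSpace ℝ (Fin p) → ℝ := fun y => (‖y - x‖ ^ 2 + r ^ 2) ^ (-s / 2) with hg
  set φ : EuclideanSpace ℝ (Fin p) → ℝ := fun y => ‖y - x‖ ^ (-(s + 2)) with hφ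
  have hnorm : Measurable fun y : EuclideanSpace ℝ (Fin p) => ‖y - x‖ :=
    (measurable_id.sub measurable_const).norm
  have hmf : Measurable f := hnorm.pow measurable_const
  have hmφ : Measurable φ := hnorm.pow measurable_const
  have hmg : Measurable g :=
    ((hnorm.pow measurable_const (γ := ℕ)).add measurable_const).pow measurable_const
  have hfnn : ∀ y, 0 ≤ f y := fun y => Real.rpow_nonneg (norm_nonneg _) _
  have hφnn : ∀ y, 0 ≤ φ y := fun y => Real.rpow_nonneg (norm_nonneg _) _
  have hgnn : ∀ y, 0 ≤ g y := fun y => Real.rpow_nonneg (by positivity) _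
  -- integrability of f
  have hfint : Integrable f ν := by
    refine ⟨hmf.aestronglyMeasurable, ?_⟩
    rw [hasFiniteIntegral_iff_ofReal (Filter.Eventually.of_forall hfnn)]
    rw [← lintegral_add_compl (fun y => ENNReal.ofReal (f y))
      (measurableSet_ball : MeasurableSet (Metric.ball x r))]
    have hnear := (dyadic_near ν x hcx hs hsd hr hc').trans_lt ENNReal.ofReal_lt_top
    have hfarb : ∫⁻ y in (Metric.ball x r)ᶜ, ENNReal.ofReal (f y) ∂ν ≤
        ENNReal.ofReal (r ^ (-s)) * ν (Metric.ball x r)ᶜ := by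
      have h1 : ∫⁻ y in (Metric.ball x r)ᶜ, ENNReal.ofReal (f y) ∂ν ≤
          ∫⁻ _ in (Metric.ball x r)ᶜ, ENNReal.ofReal (r ^ (-s)) ∂ν := by
        refine setLIntegral_mono measurable_const ?_
        intro y hy
        rw [Set.mem_compl_iff, mem_ball_iff_norm] at hy
        push_neg at hy
        exact ENNReal.ofReal_le_ofReal
          (Real.rpow_le_rpow_of_nonpos hr hy (by linarith))
      rwa [setLIntegral_const] at h1
    have hfarlt : ∫⁻ y in (Metric.ball x r)ᶜ, ENNReal.ofReal (f y) ∂ν < ⊤ :=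
      lt_of_le_of_lt hfarb (ENNReal.mul_lt_top ENNReal.ofReal_lt_top (measure_lt_top ν _))
    exact ENNReal.add_lt_top.mpr ⟨hnear, hfarlt⟩
  -- integrability of g
  have hgint : Integrable g ν := by
    refine Integrable.mono' (integrable_const ((r ^ 2) ^ (-s / 2) : ℝ))
      hmg.aestronglyMeasurable ?_
    refine Filter.Eventually.of_forall fun y => ?_
    rw [Real.norm_eq_abs, abs_of_nonneg (hgnn y)]
    exact Real.rpow_le_rpow_of_nonpos (by positivity)
      (by nlinarith [sq_nonneg (‖y - x‖)]) (by linarith)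
  -- integrability of φ on the complement of the ball
  have hφint : IntegrableOn φ (Metric.ball x r)ᶜ ν := by
    refine ⟨hmφ.aestronglyMeasurable, ?_⟩
    rw [hasFiniteIntegral_iff_ofReal (Filter.Eventually.of_forall hφnn)]
    exact (dyadic_far ν x hcx hs (by linarith) hr hc').trans_lt ENNReal.ofReal_lt_top
  -- near bound for the Bochner integral
  have K1 : ∫ y in Metric.ball x r, f y ∂ν ≤ C1 * cx * r ^ (d - s) := by
    rw [integral_eq_lintegral_of_nonneg_ae (Filter.Eventually.of_forall hfnn)
      hmf.aestronglyMeasurable]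
    exact ENNReal.toReal_le_of_le_ofReal (by positivity) (dyadic_near ν x hcx hs hsd hr hc')
  -- far bound for φ
  have K2 : ∫ y in (Metric.ball x r)ᶜ, φ y ∂ν ≤ C2 * cx * r ^ (d - s - 2) := by
    rw [integral_eq_lintegral_of_nonneg_ae (Filter.Eventually.of_forall hφnn)
      hmφ.aestronglyMeasurable]
    exact ENNReal.toReal_le_of_le_ofReal (by positivity) (dyadic_far ν x hcx hs (by linarith) hr hc')
  -- pointwise bound off the ball
  have hpt : ∀ y ∈ (Metric.ball x r)ᶜ, f y ≤ g y + (s / 2 * r ^ 2) * φ y := by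
    intro y hy
    rw [Set.mem_compl_iff, mem_ball_iff_norm] at hy
    push_neg at hy
    set t := ‖y - x‖ with htdef
    have ht : 0 < t := lt_of_lt_of_le hr hy
    have key := key_pt (q := s / 2) (a := t ^ 2) (b := t ^ 2 + r ^ 2)
      (by positivity) (by positivity) (by nlinarith [sq_nonneg r])
    have h1 : ((t ^ 2 : ℝ)) ^ (-(s / 2)) = t ^ (-s) := by
      rw [sq_rpow' t (norm_nonneg _)]; congr 1; ring
    have h2 : ((t ^ 2 : ℝ)) ^ (-(s / 2) - 1) = t ^ (-(s + 2)) := by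
      rw [sq_rpow' t (norm_nonneg _)]; congr 1; ring
    have h3 : (t ^ 2 + r ^ 2 : ℝ) - t ^ 2 = r ^ 2 := by ring
    rw [h1, h2, h3] at key
    have h4 : ((t ^ 2 + r ^ 2 : ℝ)) ^ (-(s / 2)) = g y := by
      rw [hg]; congr 1; ring
    rw [h4] at key
    simp only [hf, hφ, ← htdef]
    linarith
  -- assemble
  have hsplit : ∫ y, f y ∂ν =
      (∫ y in Metric.ball x r, f y ∂ν) + ∫ y in (Metric.ball x r)ᶜ, f y ∂ν :=
    (integral_add_compl measurableSet_ball hfint).symm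
  have hfar2 : ∫ y in (Metric.ball x r)ᶜ, f y ∂ν ≤
      ∫ y in (Metric.ball x r)ᶜ, (g y + (s / 2 * r ^ 2) * φ y) ∂ν :=
    setIntegral_mono_on hfint.integrableOn
      (hgint.integrableOn.add (hφint.const_mul _)) measurableSet_ball.compl hpt
  have hfar3 : ∫ y in (Metric.ball x r)ᶜ, (g y + (s / 2 * r ^ 2) * φ y) ∂ν =
      (∫ y in (Metric.ball x r)ᶜ, g y ∂ν) +
        (s / 2 * r ^ 2) * ∫ y in (Metric.ball x r)ᶜ, φ y ∂ν := by
    rw [integral_add hgint.integrableOn (hφint.const_mul _), integral_const_mul]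
  have hgc : ∫ y in (Metric.ball x r)ᶜ, g y ∂ν ≤ ∫ y, g y ∂ν :=
    setIntegral_le_integral hgint (Filter.Eventually.of_forall hgnn)
  have hr2 : (r : ℝ) ^ (2 : ℕ) * r ^ (d - s - 2) = r ^ (d - s) := by
    rw [← Real.rpow_natCast r 2, ← Real.rpow_add hr]
    norm_num
  have hK2' : (s / 2 * r ^ 2) * ∫ y in (Metric.ball x r)ᶜ, φ y ∂ν ≤
      s / 2 * C2 * cx * r ^ (d - s) := by
    have h5 : (s / 2 * r ^ 2) * (C2 * cx * r ^ (d - s - 2)) =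
        s / 2 * C2 * cx * r ^ (d - s) := by
      rw [← hr2]; ring
    calc (s / 2 * r ^ 2) * ∫ y in (Metric.ball x r)ᶜ, φ y ∂ν
        ≤ (s / 2 * r ^ 2) * (C2 * cx * r ^ (d - s - 2)) :=
          mul_le_mul_of_nonneg_left K2 (by positivity)
      _ = _ := h5
  have hfinal : (C1 + s / 2 * C2) * cx * r ^ (d - s) =
      C1 * cx * r ^ (d - s) + s / 2 * C2 * cx * r ^ (d - s) := by ring
  rw [ge_iff_le]
  have hgoal : ∫ y, f y ∂ν ≤ (∫ y, g y ∂ν) + (C1 + s / 2 * C2) * cx * r ^ (d - s) := by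
    rw [hfinal]
    linarith [hsplit, K1, hfar2, hfar3, hgc, hK2']
  linarith [hgoal]
end

section
/- Let d ≥ 1 be an integer, s > 0, and for |x| < 1 in ℝ^d define dμ_s = M(1 − |x|²)^{(s−d)/2} dx with M = Γ(1 + s/2)/(π^{d/2} Γ(1 + (s−d)/2)), where d − 2 < s < d. Then for every point x₀ with |x₀| = 1 there exist constants C > 1 and r₀ > 0 such that for all 0 < r < r₀, C^{−1} r^{(d+s)/2} ≤ μ_s(B(x₀, r)) ≤ C r^{(d+s)/2}. -/
/-
Write `α = (s - d) / 2 ∈ (-1, 0)`, so that `μ_s` has density `M (1 - ‖x‖²)^α` on the unit ball,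
and `α + d = (d + s) / 2`.

Lower bound: on `B(x₀, r) ∩ 𝔹` one has `0 < 1 - ‖x‖² < 2r`, so the density is at least
`M (2r)^α`, and `B(x₀, r) ∩ 𝔹` contains the ball of radius `r / 4` about `(1 - r / 2) x₀`.

Upper bound: by rotation invariance take `x₀ = (1, 0, …, 0)`, and write `x = (u, y)` with `u ∈ ℝ`,
`y ∈ ℝ^(d-1)`. For `x ∈ B(x₀, r) ∩ 𝔹` and `a = √(1 - ‖y‖²)`, the point `y` lies in the cube
`(-r, r)^(d-1)`, `1 - r < u < a`, and `1 - ‖x‖² = (a - u)(a + u) ≥ a - u` because `a + u > 2u > 1`.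
Integrating `(a - u)^α` over `u ∈ (1 - r, a)` gives at most `r^(α+1) / (α + 1)`, and the cube has
volume `(2r)^(d-1)`.
-/

open MeasureTheory Metric Set ENNReal Module

lemma one_sub_norm_sq_mem_Ioo {E : Type*} [NormedAddCommGroup E] {x x₀ : E} {r : ℝ}
    (hx₀ : ‖x₀‖ = 1) (hx : x ∈ ball x₀ r ∩ ball 0 1) : 1 - ‖x‖ ^ 2 ∈ Ioo 0 (2 * r) := by
  rw [mem_inter_iff, mem_ball_iff_norm, mem_ball_zero_iff] at hx
  have : 1 - r < ‖x‖ := by linarith [norm_sub_norm_le x₀ x, norm_sub_rev x x₀]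
  constructor <;> nlinarith [norm_nonneg x]

lemma ball_smul_subset_ball_inter_ball_zero {E : Type*} [NormedAddCommGroup E] [NormedSpace ℝ E]
    {x₀ : E} {r : ℝ} (hx₀ : ‖x₀‖ = 1) (hr : 0 ≤ r) (hr₂ : r ≤ 2) :
    ball ((1 - r / 2) • x₀) (r / 4) ⊆ ball x₀ r ∩ ball 0 1 := by
  intro x hx
  rw [mem_ball_iff_norm] at hx
  have hc : ‖(1 - r / 2) • x₀‖ = 1 - r / 2 := by
    rw [norm_smul, hx₀, mul_one, Real.norm_of_nonneg (by linarith)]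
  have hcx₀ : ‖(1 - r / 2) • x₀ - x₀‖ = r / 2 := by
    rw [show (1 - r / 2) • x₀ - x₀ = (-(r / 2)) • x₀ by module, norm_smul, hx₀, mul_one,
      norm_neg, Real.norm_of_nonneg (by linarith)]
  constructor
  · rw [mem_ball_iff_norm]
    linarith [norm_sub_le_norm_sub_add_norm_sub x ((1 - r / 2) • x₀) x₀]
  · rw [mem_ball_zero_iff]
    linarith [norm_le_norm_add_norm_sub' x ((1 - r / 2) • x₀)]

lemma exists_ofReal_mul_rpow_le_setLIntegral {E : Type*} [NormedAddCommGroup E] [NormedSpace ℝ E]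
    [MeasurableSpace E] [BorelSpace E] [FiniteDimensional ℝ E] (μ : Measure E)
    [μ.IsAddHaarMeasure] {x₀ : E} (hx₀ : ‖x₀‖ = 1) {α : ℝ} (hα : α ≤ 0) :
    ∃ c > 0, ∀ r, 0 < r → r ≤ 2 → ENNReal.ofReal (c * r ^ (α + finrank ℝ E)) ≤
      ∫⁻ x in ball x₀ r ∩ ball 0 1, ENNReal.ofReal ((1 - ‖x‖ ^ 2) ^ α) ∂μ := by
  have hV : μ (ball 0 1) ≠ ⊤ := measure_ball_lt_top.ne
  have hV₀ : 0 < (μ (ball 0 1)).toReal := toReal_pos (measure_ball_pos μ 0 one_pos).ne' hV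
  refine ⟨2 ^ α * (1 / 4) ^ finrank ℝ E * (μ (ball 0 1)).toReal, by positivity,
    fun r hr hr₂ => ?_⟩
  calc ENNReal.ofReal (2 ^ α * (1 / 4) ^ finrank ℝ E * (μ (ball 0 1)).toReal *
        r ^ (α + finrank ℝ E))
      = ENNReal.ofReal ((2 * r) ^ α) * μ (ball ((1 - r / 2) • x₀) (r / 4)) := by
        rw [Measure.addHaar_ball_of_pos μ _ (by positivity : 0 < r / 4), ← mul_assoc,
          ← ofReal_mul (by positivity)]
        conv_rhs => rw [← ofReal_toReal hV, ← ofReal_mul (by positivity)]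
        rw [Real.mul_rpow (by norm_num) hr.le,
          Real.rpow_add hr, Real.rpow_natCast, div_eq_mul_one_div r, mul_pow]
        ring_nf
    _ ≤ ENNReal.ofReal ((2 * r) ^ α) * μ (ball x₀ r ∩ ball 0 1) := by
        gcongr
        exact ball_smul_subset_ball_inter_ball_zero hx₀ hr.le hr₂
    _ = ∫⁻ _ in ball x₀ r ∩ ball 0 1, ENNReal.ofReal ((2 * r) ^ α) ∂μ :=
        (setLIntegral_const _ _).symm
    _ ≤ _ := setLIntegral_mono' (measurableSet_ball.inter measurableSet_ball) fun x hx => by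
        obtain ⟨hpos, hlt⟩ := one_sub_norm_sq_mem_Ioo hx₀ hx
        exact ofReal_le_ofReal (Real.rpow_le_rpow_of_nonpos hpos hlt.le hα)

lemma setLIntegral_ball_inter_ball_zero_comp_norm_eq {E : Type*} [NormedAddCommGroup E]
    [InnerProductSpace ℝ E] [FiniteDimensional ℝ E] [MeasurableSpace E] [BorelSpace E]
    (g : ℝ → ℝ≥0∞) {x₀ y₀ : E} (h : ‖x₀‖ = ‖y₀‖) (r R : ℝ) :
    ∫⁻ x in ball x₀ r ∩ ball 0 R, g ‖x‖ = ∫⁻ x in ball y₀ r ∩ ball 0 R, g ‖x‖ := by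
  obtain ⟨T, hT⟩ : ∃ T : E ≃ₗᵢ[ℝ] E, T y₀ = x₀ :=
    ⟨(ℝ ∙ (y₀ - x₀))ᗮ.reflection, Submodule.reflection_sub h.symm⟩
  have hpre : T ⁻¹' (ball x₀ r ∩ ball 0 R) = ball y₀ r ∩ ball 0 R := by
    ext x
    simp only [mem_preimage, mem_inter_iff, mem_ball, dist_eq_norm, sub_zero, ← hT, ← map_sub,
      LinearIsometryEquiv.norm_map]
  rw [← hpre, ← T.measurePreserving.setLIntegral_comp_preimage_emb
    T.toHomeomorph.measurableEmbedding]
  simp only [LinearIsometryEquiv.norm_map]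

lemma lintegral_Ioo_sub_rpow_le {a c r α : ℝ} (hα : -1 < α) (h : a - c ≤ r) :
    ∫⁻ u in Ioo c a, ENNReal.ofReal ((a - u) ^ α) ≤ ENNReal.ofReal (r ^ (α + 1) / (α + 1)) := by
  rcases le_or_gt a c with hac | hca
  · simp [Ioo_eq_empty_of_le hac]
  have hint : IntervalIntegrable (fun u : ℝ => (a - u) ^ α) volume c a := by
    simpa using
      ((intervalIntegral.intervalIntegrable_rpow' (a := 0) (b := a - c) hα).comp_sub_left a).symm
  have hnonneg : 0 ≤ᵐ[volume.restrict (Ioo c a)] fun u => (a - u) ^ α :=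
    (ae_restrict_mem measurableSet_Ioo).mono fun u hu => Real.rpow_nonneg (by linarith [hu.2]) _
  rw [← ofReal_integral_eq_lintegral_ofReal
    ((intervalIntegrable_iff_integrableOn_Ioo_of_le hca.le).1 hint) hnonneg,
    ← integral_Ioc_eq_integral_Ioo, ← intervalIntegral.integral_of_le hca.le,
    intervalIntegral.integral_comp_sub_left (fun t => t ^ α), sub_self,
    integral_rpow (Or.inl hα), Real.zero_rpow (by linarith), sub_zero]
  gcongr <;> linarith

section EuclideanSpace

variable {n : ℕ}

lemma lintegral_le_lintegral_lintegral_cons (f : EuclideanSpace ℝ (Fin (n + 1)) → ℝ≥0∞) :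
    ∫⁻ x, f x ≤ ∫⁻ y : Fin n → ℝ, ∫⁻ u : ℝ, f (WithLp.toLp 2 (Fin.cons u y)) := by
  calc ∫⁻ x, f x = ∫⁻ z : Fin (n + 1) → ℝ, f (WithLp.toLp 2 z) :=
        ((PiLp.volume_preserving_toLp _).lintegral_comp_emb
          (MeasurableEquiv.toLp 2 _).measurableEmbedding f).symm
    _ = ∫⁻ p : ℝ × (Fin n → ℝ), f (WithLp.toLp 2 (Fin.cons p.1 p.2)) := by
        rw [← ((volume_preserving_piFinSuccAbove (fun _ => ℝ) 0).symm).lintegral_comp_emb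
          (MeasurableEquiv.measurableEmbedding _)]
        simp only [MeasurableEquiv.piFinSuccAbove_symm_apply, Fin.insertNthEquiv_zero]
        rfl
    _ = ∫⁻ q : (Fin n → ℝ) × ℝ, f (WithLp.toLp 2 (Fin.cons q.2 q.1)) := by
        rw [Measure.volume_eq_prod, Measure.volume_eq_prod,
          ← Measure.measurePreserving_swap.lintegral_comp_emb
            MeasurableEquiv.prodComm.measurableEmbedding]
        rfl
    _ ≤ _ := by
        rw [Measure.volume_eq_prod]
        exact lintegral_prod_le _

lemma norm_toLp_cons_sq (u : ℝ) (y : Fin n → ℝ) :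
    ‖(WithLp.toLp 2 (Fin.cons u y) : EuclideanSpace ℝ (Fin (n + 1)))‖ ^ 2 =
      u ^ 2 + ∑ i, y i ^ 2 := by
  simp [EuclideanSpace.real_norm_sq_eq, Fin.sum_univ_succ]

lemma toLp_cons_sub_toLp_cons (u v : ℝ) (y z : Fin n → ℝ) :
    (WithLp.toLp 2 (Fin.cons u y) : EuclideanSpace ℝ (Fin (n + 1))) - WithLp.toLp 2 (Fin.cons v z) =
      WithLp.toLp 2 (Fin.cons (u - v) (y - z)) := by
  ext i
  refine Fin.cases ?_ (fun j => ?_) i <;> simp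

lemma mem_cap_of_mem_ball_inter_ball_zero {r u : ℝ} {y : Fin n → ℝ} (hr : r ≤ 1 / 2)
    (hx : WithLp.toLp 2 (Fin.cons u y) ∈
      ball (WithLp.toLp 2 (Fin.cons 1 0) : EuclideanSpace ℝ (Fin (n + 1))) r ∩ ball 0 1) :
    y ∈ univ.pi (fun _ => Ioo (-r) r) ∧ u ∈ Ioo (1 - r) √(1 - ∑ i, y i ^ 2) ∧
      √(1 - ∑ i, y i ^ 2) - u ≤
        1 - ‖(WithLp.toLp 2 (Fin.cons u y) : EuclideanSpace ℝ (Fin (n + 1)))‖ ^ 2 := by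
  rw [mem_inter_iff, mem_ball_iff_norm, mem_ball_zero_iff, toLp_cons_sub_toLp_cons, sub_zero] at hx
  have hr₀ : 0 < r := (norm_nonneg _).trans_lt hx.1
  have hx₀ := pow_lt_pow_left₀ hx.1 (norm_nonneg _) two_ne_zero
  have hx₁ := pow_lt_pow_left₀ hx.2 (norm_nonneg _) two_ne_zero
  rw [norm_toLp_cons_sq] at hx₀ hx₁ ⊢
  rw [one_pow] at hx₁
  set w := ∑ i, y i ^ 2
  have hw : 0 ≤ w := Finset.sum_nonneg fun i _ => sq_nonneg (y i)
  have hu : 1 - r < u := by linarith [(abs_lt_of_sq_lt_sq' (a := u - 1) (by linarith) hr₀.le).1]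
  have hu_lt : u < √(1 - w) := Real.lt_sqrt_of_sq_lt (by linarith)
  have hsq : √(1 - w) ^ 2 = 1 - w := Real.sq_sqrt (by linarith [sq_nonneg u])
  refine ⟨fun i _ => ?_, ⟨hu, hu_lt⟩, by nlinarith⟩
  have hyi : y i ^ 2 ≤ w := Finset.single_le_sum (fun j _ => sq_nonneg (y j)) (Finset.mem_univ i)
  exact abs_lt.1 (abs_lt_of_sq_lt_sq (by linarith [sq_nonneg (u - 1)]) hr₀.le)

lemma setLIntegral_ball_toLp_cons_one_zero_le {α r : ℝ} (hα : -1 < α) (hα₀ : α ≤ 0) (hr : 0 < r)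
    (hr₂ : r ≤ 1 / 2) :
    ∫⁻ x in ball (WithLp.toLp 2 (Fin.cons 1 0) : EuclideanSpace ℝ (Fin (n + 1))) r ∩ ball 0 1,
        ENNReal.ofReal ((1 - ‖x‖ ^ 2) ^ α) ≤
      ENNReal.ofReal (r ^ (α + 1) / (α + 1) * (2 * r) ^ n) := by
  set S := ball (WithLp.toLp 2 (Fin.cons 1 0) : EuclideanSpace ℝ (Fin (n + 1))) r ∩ ball 0 1
  set g : EuclideanSpace ℝ (Fin (n + 1)) → ℝ≥0∞ := fun x => ENNReal.ofReal ((1 - ‖x‖ ^ 2) ^ α)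
  set K := ENNReal.ofReal (r ^ (α + 1) / (α + 1))
  have hslice : ∀ y : Fin n → ℝ, ∫⁻ u, S.indicator g (WithLp.toLp 2 (Fin.cons u y)) ≤
      (univ.pi fun _ => Ioo (-r) r).indicator (fun _ => K) y := by
    intro y
    by_cases hy : y ∈ univ.pi fun _ => Ioo (-r) r
    · rw [indicator_of_mem hy]
      calc ∫⁻ u, S.indicator g (WithLp.toLp 2 (Fin.cons u y))
          ≤ ∫⁻ u, (Ioo (1 - r) √(1 - ∑ i, y i ^ 2)).indicator
              (fun u => ENNReal.ofReal ((√(1 - ∑ i, y i ^ 2) - u) ^ α)) u := by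
            refine lintegral_mono fun u => ?_
            by_cases hx : WithLp.toLp 2 (Fin.cons u y) ∈ S
            · obtain ⟨-, hu, hle⟩ := mem_cap_of_mem_ball_inter_ball_zero hr₂ hx
              rw [indicator_of_mem hx, indicator_of_mem hu]
              exact ofReal_le_ofReal (Real.rpow_le_rpow_of_nonpos (sub_pos.2 hu.2) hle hα₀)
            · simp [indicator_of_notMem hx]
        _ ≤ K := by
            rw [lintegral_indicator measurableSet_Ioo]
            refine lintegral_Ioo_sub_rpow_le hα ?_
            have hw : 0 ≤ ∑ i, y i ^ 2 := Finset.sum_nonneg fun i _ => sq_nonneg (y i)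
            linarith [Real.sqrt_le_one.2 (sub_le_self 1 hw)]
    · have hzero : ∀ u, S.indicator g (WithLp.toLp 2 (Fin.cons u y)) = 0 := fun u =>
        indicator_of_notMem (fun hx => hy (mem_cap_of_mem_ball_inter_ball_zero hr₂ hx).1) _
      simp [hzero, hy]
  calc ∫⁻ x in S, g x = ∫⁻ x, S.indicator g x :=
        (lintegral_indicator (measurableSet_ball.inter measurableSet_ball) g).symm
    _ ≤ ∫⁻ y : Fin n → ℝ, ∫⁻ u, S.indicator g (WithLp.toLp 2 (Fin.cons u y)) :=
        lintegral_le_lintegral_lintegral_cons _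
    _ ≤ ∫⁻ y, (univ.pi fun _ => Ioo (-r) r).indicator (fun _ => K) y := lintegral_mono hslice
    _ = _ := by
        rw [lintegral_indicator_const (MeasurableSet.univ_pi fun _ => measurableSet_Ioo),
          volume_pi_pi]
        simp only [Real.volume_Ioo, Finset.prod_const, Finset.card_univ, Fintype.card_fin]
        have hα₁ : 0 < α + 1 := by linarith
        rw [sub_neg_eq_add, ← two_mul, ← ofReal_pow (by positivity), ← ofReal_mul (by positivity)]

lemma exists_setLIntegral_le_ofReal_mul_rpow {x₀ : EuclideanSpace ℝ (Fin (n + 1))}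
    (hx₀ : ‖x₀‖ = 1) {α : ℝ} (hα : -1 < α) (hα₀ : α ≤ 0) :
    ∃ c, ∀ r, 0 < r → r ≤ 1 / 2 → ∫⁻ x in ball x₀ r ∩ ball 0 1,
      ENNReal.ofReal ((1 - ‖x‖ ^ 2) ^ α) ≤ ENNReal.ofReal (c * r ^ (α + (n + 1 : ℕ))) := by
  have he₀ : ‖(WithLp.toLp 2 (Fin.cons 1 0) : EuclideanSpace ℝ (Fin (n + 1)))‖ = 1 := by
    rw [← pow_eq_one_iff_of_nonneg (norm_nonneg _) two_ne_zero, norm_toLp_cons_sq]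
    simp
  refine ⟨2 ^ n / (α + 1), fun r hr hr₂ => ?_⟩
  rw [setLIntegral_ball_inter_ball_zero_comp_norm_eq (fun t => ENNReal.ofReal ((1 - t ^ 2) ^ α))
    (hx₀.trans he₀.symm)]
  refine (setLIntegral_ball_toLp_cons_one_zero_le hα hα₀ hr hr₂).trans_eq ?_
  rw [Real.rpow_add hr α ((n + 1 : ℕ) : ℝ), Real.rpow_add hr α 1, Real.rpow_natCast,
    Real.rpow_one, mul_pow]
  ring_nf

end EuclideanSpace

lemma exists_one_lt_two_sided_rpow_bound {m : ℝ → ℝ≥0∞} {p c₁ c₂ r₀ : ℝ} (hc₁ : 0 < c₁)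
    (hr₀ : 0 < r₀) (hlow : ∀ r, 0 < r → r < r₀ → ENNReal.ofReal (c₁ * r ^ p) ≤ m r)
    (hup : ∀ r, 0 < r → r < r₀ → m r ≤ ENNReal.ofReal (c₂ * r ^ p)) :
    ∃ C > (1 : ℝ), ∃ r₀ > (0 : ℝ), ∀ r : ℝ, 0 < r → r < r₀ →
      ENNReal.ofReal (C⁻¹ * r ^ p) ≤ m r ∧ m r ≤ ENNReal.ofReal (C * r ^ p) := by
  set C := max c₁⁻¹ c₂ + 1
  have hC₁ : c₁⁻¹ + 1 ≤ C := by simp [C]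
  have hC₂ : c₂ ≤ C := by linarith [le_max_right c₁⁻¹ c₂]
  refine ⟨C, by linarith [inv_pos.2 hc₁], r₀, hr₀, fun r hr hrr₀ => ⟨?_, ?_⟩⟩
  · refine le_trans (ofReal_le_ofReal ?_) (hlow r hr hrr₀)
    gcongr
    exact inv_le_of_inv_le₀ hc₁ (by linarith)
  · exact (hup r hr hrr₀).trans (ofReal_le_ofReal (by gcongr))

theorem stmt11_general (d : ℕ) (s : ℝ)
    (h1 : (d : ℝ) - 2 < s) (h2 : s < d) (M : ℝ)
    (hM : M = Real.Gamma (1 + s / 2) /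
      (Real.pi ^ ((d : ℝ) / 2) * Real.Gamma (1 + (s - d) / 2)))
    (μ : Measure (EuclideanSpace ℝ (Fin d)))
    (hμ : μ = ((volume : Measure (EuclideanSpace ℝ (Fin d))).restrict
        (Metric.ball 0 1)).withDensity
        (fun x => ENNReal.ofReal (M * (1 - ‖x‖ ^ 2) ^ ((s - (d : ℝ)) / 2))))
    (x₀ : EuclideanSpace ℝ (Fin d)) (hx₀ : ‖x₀‖ = 1) :
    ∃ C > (1 : ℝ), ∃ r₀ > (0 : ℝ), ∀ r : ℝ, 0 < r → r < r₀ →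
      ENNReal.ofReal (C⁻¹ * r ^ (((d : ℝ) + s) / 2)) ≤ μ (Metric.ball x₀ r) ∧
        μ (Metric.ball x₀ r) ≤ ENNReal.ofReal (C * r ^ (((d : ℝ) + s) / 2)) := by
  obtain _ | n := d
  · simp [Subsingleton.elim x₀ 0] at hx₀
  set α := (s - ((n + 1 : ℕ) : ℝ)) / 2 with hα_def
  have hα : -1 < α := by rw [hα_def]; linarith
  have hα₀ : α ≤ 0 := by rw [hα_def]; linarith
  have hd : (0 : ℝ) ≤ (n + 1 : ℕ) := Nat.cast_nonneg _
  have hM₀ : 0 < M := hM ▸ div_pos (Real.Gamma_pos_of_pos (by linarith))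
    (mul_pos (by positivity) (Real.Gamma_pos_of_pos (by linarith)))
  have hμ_ball : ∀ r, μ (ball x₀ r) =
      ENNReal.ofReal M * ∫⁻ x in ball x₀ r ∩ ball 0 1, ENNReal.ofReal ((1 - ‖x‖ ^ 2) ^ α) := by
    intro r
    rw [hμ, withDensity_apply _ measurableSet_ball, Measure.restrict_restrict measurableSet_ball,
      ← lintegral_const_mul' _ _ ofReal_ne_top]
    simp_rw [ofReal_mul hM₀.le]
  obtain ⟨c₁, hc₁, hlow⟩ := exists_ofReal_mul_rpow_le_setLIntegral volume hx₀ hα₀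
  obtain ⟨c₂, hup⟩ := exists_setLIntegral_le_ofReal_mul_rpow hx₀ hα hα₀
  rw [finrank_euclideanSpace_fin] at hlow
  rw [show ((n + 1 : ℕ) + s) / 2 = α + (n + 1 : ℕ) by ring]
  refine exists_one_lt_two_sided_rpow_bound (c₂ := M * c₂) (mul_pos hM₀ hc₁) one_half_pos
    (fun r hr hr₂ => ?_) (fun r hr hr₂ => ?_)
  · rw [hμ_ball, mul_assoc, ofReal_mul hM₀.le]
    gcongr
    exact hlow r hr (by linarith)
  · rw [hμ_ball, mul_assoc, ofReal_mul hM₀.le]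
    gcongr
    exact hup r hr hr₂.le

theorem stmt11 (d : ℕ) (hd : 1 ≤ d) (s : ℝ) (hs : 0 < s)
    (h1 : (d : ℝ) - 2 < s) (h2 : s < d) (M : ℝ)
    (hM : M = Real.Gamma (1 + s / 2) /
      (Real.pi ^ ((d : ℝ) / 2) * Real.Gamma (1 + (s - d) / 2)))
    (μ : Measure (EuclideanSpace ℝ (Fin d)))
    (hμ : μ = ((volume : Measure (EuclideanSpace ℝ (Fin d))).restrict
        (Metric.ball 0 1)).withDensity
        (fun x => ENNReal.ofReal (M * (1 - ‖x‖ ^ 2) ^ ((s - (d : ℝ)) / 2))))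
    (x₀ : EuclideanSpace ℝ (Fin d)) (hx₀ : ‖x₀‖ = 1) :
    ∃ C > (1 : ℝ), ∃ r₀ > (0 : ℝ), ∀ r : ℝ, 0 < r → r < r₀ →
      ENNReal.ofReal (C⁻¹ * r ^ (((d : ℝ) + s) / 2)) ≤ μ (Metric.ball x₀ r) ∧
        μ (Metric.ball x₀ r) ≤ ENNReal.ofReal (C * r ^ (((d : ℝ) + s) / 2)) :=
  stmt11_general d s h1 h2 M hM μ hμ x₀ hx₀
end
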